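/- arXiv:2206.13948 — 3 statements merged into one kernel-verified Lean document; each statement's English description precedes it below -/
import Mathlib

section
/- Let 𝒳 be a compact subset of ℝ^d, let C : ℝ^d × ℝ^d → ℝ be nonnegative of class C^q with q ≥ 1, let p ≥ 1 be an integer, set κ := min{p, q}, and let ε > 0. Then for every m > 0 and R > 0 there exists a constant H > 0 (depending only on m, R, C, q, ε and p) such that for all f, g ∈ C^q_m(B_R, ℝ) and all T₁, T₂ ∈ C^p_R(𝒳, ℝ^d), the function (x,y) ∈ ℝ^d × ℝ^d ↦ h^{f,g}_{C,ε}(T₁(x), T₂(y)) belongs to C^κ_H(𝒳 × 𝒳, ℝ). -/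
open MeasureTheory
open scoped ENNReal NNReal

noncomputable section

/-- `ℝ^d` with the Euclidean norm. -/
abbrev Euc (d : ℕ) := EuclideanSpace ℝ (Fin d)

/-- The class `C^r_m(A, F)` of `r`-times continuously differentiable functions whose
Fréchet derivatives up to order `r` are bounded by `m` in operator norm on `A`. -/
def smoothClass {E F : Type*} [NormedAddCommGroup E] [NormedSpace ℝ E]
    [NormedAddCommGroup F] [NormedSpace ℝ F] (r : ℕ) (A : Set E) (m : ℝ) :
    Set (E → F) :=
  {f | ContDiff ℝ (r : ℕ∞) f ∧ ∀ k ≤ r, ∀ x ∈ A, ‖iteratedFDeriv ℝ k f x‖ ≤ m}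

/-- The global potential `h^{f,g}_{C,ε}`. -/
def globalPot {d : ℕ} (ε : ℝ) (C : Euc d × Euc d → ℝ) (f g : Euc d → ℝ)
    (x y : Euc d) : ℝ :=
  f x + g y - ε * Real.exp ((f x + g y - C (x, y)) / ε) + ε

namespace smoothClass

variable {E F G : Type*} [NormedAddCommGroup E] [NormedSpace ℝ E]
  [NormedAddCommGroup F] [NormedSpace ℝ F] [NormedAddCommGroup G] [NormedSpace ℝ G]
  {r r' : ℕ} {A : Set E} {a b : ℝ} {f g : E → F}

lemma mono (h : a ≤ b) (hf : f ∈ smoothClass r A a) : f ∈ smoothClass r A b :=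
  ⟨hf.1, fun i hi x hx => (hf.2 i hi x hx).trans h⟩

lemma anti (h : r' ≤ r) (hf : f ∈ smoothClass r A a) : f ∈ smoothClass r' A a :=
  ⟨hf.1.of_le (by exact_mod_cast h), fun i hi x hx => hf.2 i (hi.trans h) x hx⟩

lemma norm_le {x : E} (hf : f ∈ smoothClass r A a) (hx : x ∈ A) : ‖f x‖ ≤ a := by
  have := hf.2 0 (Nat.zero_le r) x hx
  rwa [norm_iteratedFDeriv_zero] at this

lemma add (hf : f ∈ smoothClass r A a) (hg : g ∈ smoothClass r A b) :
    (fun x => f x + g x) ∈ smoothClass r A (a + b) := by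
  refine ⟨hf.1.add hg.1, fun i hi x hx => ?_⟩
  rw [iteratedFDeriv_add_apply' (hf.1.of_le (by exact_mod_cast hi)).contDiffAt
    (hg.1.of_le (by exact_mod_cast hi)).contDiffAt]
  exact (norm_add_le _ _).trans (add_le_add (hf.2 i hi x hx) (hg.2 i hi x hx))

lemma smul (c : ℝ) (hf : f ∈ smoothClass r A a) :
    (fun x => c • f x) ∈ smoothClass r A (|c| * a) := by
  refine ⟨hf.1.const_smul c, fun i hi x hx => ?_⟩
  rw [iteratedFDeriv_const_smul_apply' (hf.1.of_le (by exact_mod_cast hi)).contDiffAt]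
  refine (norm_smul_le c (iteratedFDeriv ℝ i f x)).trans ?_
  rw [Real.norm_eq_abs]
  exact mul_le_mul_of_nonneg_left (hf.2 i hi x hx) (abs_nonneg c)

lemma sub (hf : f ∈ smoothClass r A a) (hg : g ∈ smoothClass r A b) :
    (fun x => f x - g x) ∈ smoothClass r A (a + b) := by
  have h3 := smoothClass.add hf (smoothClass.smul (-1 : ℝ) hg)
  have heq : (fun x => f x + (-1 : ℝ) • g x) = fun x => f x - g x := by
    funext x; simp [sub_eq_add_neg]
  rw [heq] at h3
  simpa using h3

lemma const (c : F) : (fun _ : E => c) ∈ smoothClass r A ‖c‖ := by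
  refine ⟨contDiff_const, fun i hi x hx => ?_⟩
  cases i with
  | zero => simp [norm_iteratedFDeriv_zero]
  | succ n => rw [iteratedFDeriv_const_of_ne (by simp)]; simp

lemma comp {S : Set F} {g : F → G} {f : E → F} (hg : g ∈ smoothClass r S a)
    (hf : f ∈ smoothClass r A b) (hmaps : ∀ x ∈ A, f x ∈ S) :
    (fun x => g (f x)) ∈ smoothClass r A ((r.factorial : ℝ) * max a 0 * max b 1 ^ r) := by
  refine ⟨hg.1.comp hf.1, fun i hi x hx => ?_⟩
  have h := norm_iteratedFDeriv_comp_le (n := i) hg.1 hf.1 (by exact_mod_cast hi) x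
      (C := max a 0) (D := max b 1)
      (fun j hj => le_max_of_le_left (hg.2 j (hj.trans hi) _ (hmaps x hx)))
      (fun j hj1 hj => le_trans (le_max_of_le_left (hf.2 j (hj.trans hi) x hx))
        (le_self_pow₀ (le_max_right _ _) (by omega)))
  refine le_trans h ?_
  have h1 : (0:ℝ) ≤ max a 0 := le_max_right _ _
  have h2 : (1:ℝ) ≤ max b 1 := le_max_right _ _
  have hfac : (i.factorial : ℝ) ≤ (r.factorial : ℝ) := by exact_mod_cast Nat.factorial_le hi
  have hpow : max b 1 ^ i ≤ max b 1 ^ r := pow_le_pow_right₀ h2 hi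
  have h0 : (0:ℝ) ≤ (i.factorial : ℝ) := by positivity
  calc (i.factorial : ℝ) * max a 0 * max b 1 ^ i ≤ (r.factorial : ℝ) * max a 0 * max b 1 ^ i := by
        gcongr
    _ ≤ (r.factorial : ℝ) * max a 0 * max b 1 ^ r := by
        have : (0:ℝ) ≤ (r.factorial : ℝ) * max a 0 := by positivity
        exact mul_le_mul_of_nonneg_left hpow this

lemma compCLMr {L : G →L[ℝ] E} (hL : ‖L‖ ≤ 1) {B : Set G} (hf : f ∈ smoothClass r A a)
    (hB : ∀ x ∈ B, L x ∈ A) : (fun x => f (L x)) ∈ smoothClass r B a := by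
  refine ⟨hf.1.comp L.contDiff, fun i hi x hx => ?_⟩
  rw [show (fun x => f (L x)) = f ∘ L from rfl,
    L.iteratedFDeriv_comp_right hf.1 x (by exact_mod_cast hi)]
  refine le_trans (ContinuousMultilinearMap.norm_compContinuousLinearMap_le _ _) ?_
  have ha : (0:ℝ) ≤ a := (norm_nonneg _).trans (smoothClass.norm_le hf (hB x hx))
  calc ‖iteratedFDeriv ℝ i f (L x)‖ * ∏ _j : Fin i, ‖L‖ ≤ a * 1 :=
      mul_le_mul (hf.2 i hi _ (hB x hx))
        (Finset.prod_le_one (fun _ _ => norm_nonneg _) (fun _ _ => hL))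
        (Finset.prod_nonneg fun _ _ => norm_nonneg _) ha
    _ = a := mul_one a

lemma compCLMl {L : F →L[ℝ] G} (hL : ‖L‖ ≤ 1) (hf : f ∈ smoothClass r A a) :
    (fun x => L (f x)) ∈ smoothClass r A a := by
  refine ⟨L.contDiff.comp hf.1, fun i hi x hx => ?_⟩
  rw [show (fun x => L (f x)) = (L : F → G) ∘ f from rfl,
    L.iteratedFDeriv_comp_left (x := x) hf.1.contDiffAt (by exact_mod_cast hi)]
  refine le_trans (ContinuousLinearMap.norm_compContinuousMultilinearMap_le _ _) ?_
  calc ‖L‖ * ‖iteratedFDeriv ℝ i f x‖ ≤ 1 * a :=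
      mul_le_mul hL (hf.2 i hi x hx) (norm_nonneg _) zero_le_one
    _ = a := one_mul a

lemma exp_mem (r : ℕ) (c : ℝ) :
    Real.exp ∈ smoothClass r {t : ℝ | t ≤ c} (Real.exp c) := by
  refine ⟨Real.contDiff_exp, fun i hi t ht => ?_⟩
  rw [norm_iteratedFDeriv_eq_norm_iteratedDeriv, iteratedDeriv_eq_iterate, Real.iter_deriv_exp]
  rw [Real.norm_eq_abs, abs_of_pos (Real.exp_pos t)]
  exact Real.exp_le_exp.2 ht

end smoothClass


theorem smoothness_of_global_potential_under_data_processing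
    {d : ℕ} (𝒳 : Set (Euc d)) (h𝒳 : IsCompact 𝒳)
    (q p : ℕ) (hq : 1 ≤ q) (hp : 1 ≤ p) (ε : ℝ) (hε : 0 < ε)
    (C : Euc d × Euc d → ℝ) (hC0 : ∀ z, 0 ≤ C z) (hC : ContDiff ℝ (q : ℕ∞) C)
    (m R : ℝ) (hm : 0 < m) (hR : 0 < R) :
    ∃ H > (0 : ℝ), ∀ f g : Euc d → ℝ,
      f ∈ smoothClass q (Metric.closedBall (0 : Euc d) R) m →
      g ∈ smoothClass q (Metric.closedBall (0 : Euc d) R) m →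
      ∀ T₁ T₂ : Euc d → Euc d,
        T₁ ∈ smoothClass p 𝒳 R → T₂ ∈ smoothClass p 𝒳 R →
        (fun z : Euc d × Euc d => globalPot ε C f g (T₁ z.1) (T₂ z.2)) ∈
          smoothClass (min p q) (𝒳 ×ˢ 𝒳) H := by
  classical
  set κ := min p q with hκ
  set A : Set (Euc d × Euc d) := 𝒳 ×ˢ 𝒳 with hA
  set K : Set (Euc d × Euc d) := Metric.closedBall 0 (R + R) with hK
  -- bound M for derivatives of C on K
  have hMex : ∀ i : ℕ, ∃ Mi : ℝ, ∀ x ∈ K, i ≤ q → ‖iteratedFDeriv ℝ i C x‖ ≤ Mi := by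
    intro i
    by_cases hi : i ≤ q
    · obtain ⟨Mi, hMi⟩ := (isCompact_closedBall _ _).exists_bound_of_continuousOn
        ((hC.continuous_iteratedFDeriv (by exact_mod_cast hi)).continuousOn)
      exact ⟨Mi, fun x hx _ => hMi x hx⟩
    · exact ⟨0, fun x hx h => absurd h hi⟩
  choose Mf hMf using hMex
  set M : ℝ := (Finset.range (q + 1)).sup' ⟨0, by simp⟩ Mf with hMdef
  have hM : ∀ i ≤ q, ∀ x ∈ K, ‖iteratedFDeriv ℝ i C x‖ ≤ M := by
    intro i hi x hx
    refine (hMf i x hx hi).trans ?_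
    exact Finset.le_sup' Mf (Finset.mem_range.2 (Nat.lt_succ_of_le hi))
  -- constants
  set m₁ : ℝ := (κ.factorial : ℝ) * max m 0 * max R 1 ^ κ with hm₁
  set m₃ : ℝ := (κ.factorial : ℝ) * max M 0 * max (R + R) 1 ^ κ with hm₃
  set b : ℝ := (m₁ + m₁) + m₃ with hb
  set b' : ℝ := |ε⁻¹| * b with hb'
  set e₀ : ℝ := (κ.factorial : ℝ) * max (Real.exp b') 0 * max b' 1 ^ κ with he₀
  set B : ℝ := ((m₁ + m₁) + |ε| * e₀) + ‖ε‖ with hB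
  refine ⟨max B 1, lt_of_lt_of_le one_pos (le_max_right _ _), ?_⟩
  intro f g hf hg T₁ T₂ hT₁ hT₂
  -- norms of projections
  have hfst : ‖ContinuousLinearMap.fst ℝ (Euc d) (Euc d)‖ ≤ 1 := by
    refine ContinuousLinearMap.opNorm_le_bound _ zero_le_one fun z => ?_
    rw [one_mul]; exact norm_fst_le z
  have hsnd : ‖ContinuousLinearMap.snd ℝ (Euc d) (Euc d)‖ ≤ 1 := by
    refine ContinuousLinearMap.opNorm_le_bound _ zero_le_one fun z => ?_
    rw [one_mul]; exact norm_snd_le z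
  have hinl : ‖ContinuousLinearMap.inl ℝ (Euc d) (Euc d)‖ ≤ 1 := by
    refine ContinuousLinearMap.opNorm_le_bound _ zero_le_one fun z => ?_
    rw [one_mul]
    simp [Prod.norm_def]
  have hinr : ‖ContinuousLinearMap.inr ℝ (Euc d) (Euc d)‖ ≤ 1 := by
    refine ContinuousLinearMap.opNorm_le_bound _ zero_le_one fun z => ?_
    rw [one_mul]
    simp [Prod.norm_def]
  -- T₁ ∘ fst, T₂ ∘ snd
  have hT₁' : (fun z : Euc d × Euc d => T₁ z.1) ∈ smoothClass κ A R := by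
    refine smoothClass.anti (min_le_left p q) ?_
    exact smoothClass.compCLMr hfst hT₁ (fun z hz => hz.1)
  have hT₂' : (fun z : Euc d × Euc d => T₂ z.2) ∈ smoothClass κ A R := by
    refine smoothClass.anti (min_le_left p q) ?_
    exact smoothClass.compCLMr hsnd hT₂ (fun z hz => hz.2)
  have hmaps₁ : ∀ z ∈ A, T₁ z.1 ∈ Metric.closedBall (0 : Euc d) R := fun z hz => by
    rw [Metric.mem_closedBall, dist_zero_right]
    have h := smoothClass.norm_le hT₁' hz
    exact h
  have hmaps₂ : ∀ z ∈ A, T₂ z.2 ∈ Metric.closedBall (0 : Euc d) R := fun z hz => by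
    rw [Metric.mem_closedBall, dist_zero_right]
    have h := smoothClass.norm_le hT₂' hz
    exact h
  -- F₁ and F₂
  have hF₁ : (fun z : Euc d × Euc d => f (T₁ z.1)) ∈ smoothClass κ A m₁ :=
    smoothClass.comp (smoothClass.anti (min_le_right p q) hf) hT₁' hmaps₁
  have hF₂ : (fun z : Euc d × Euc d => g (T₂ z.2)) ∈ smoothClass κ A m₁ :=
    smoothClass.comp (smoothClass.anti (min_le_right p q) hg) hT₂' hmaps₂
  -- Ψ
  have hΨ : (fun z : Euc d × Euc d => ((T₁ z.1, T₂ z.2) : Euc d × Euc d)) ∈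
      smoothClass κ A (R + R) := by
    have h1 := smoothClass.compCLMl hinl hT₁'
    have h2 := smoothClass.compCLMl hinr hT₂'
    have h3 := smoothClass.add h1 h2
    have heq : (fun z : Euc d × Euc d =>
        (ContinuousLinearMap.inl ℝ (Euc d) (Euc d)) (T₁ z.1) +
        (ContinuousLinearMap.inr ℝ (Euc d) (Euc d)) (T₂ z.2)) =
        fun z : Euc d × Euc d => ((T₁ z.1, T₂ z.2) : Euc d × Euc d) := by
      funext z
      simp [Prod.ext_iff]
    rwa [heq] at h3
  have hmapsΨ : ∀ z ∈ A, ((T₁ z.1, T₂ z.2) : Euc d × Euc d) ∈ K := fun z hz => by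
    rw [hK, Metric.mem_closedBall, dist_zero_right]
    have h := smoothClass.norm_le hΨ hz
    exact h
  -- C on K
  have hCK : C ∈ smoothClass κ K M :=
    ⟨hC.of_le (by exact_mod_cast min_le_right p q),
      fun i hi x hx => hM i (hi.trans (min_le_right p q)) x hx⟩
  have hF₃ : (fun z : Euc d × Euc d => C (T₁ z.1, T₂ z.2)) ∈ smoothClass κ A m₃ :=
    smoothClass.comp hCK hΨ hmapsΨ
  -- u and v
  have hu : (fun z : Euc d × Euc d =>
      (f (T₁ z.1) + g (T₂ z.2)) - C (T₁ z.1, T₂ z.2)) ∈ smoothClass κ A b :=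
    smoothClass.sub (smoothClass.add hF₁ hF₂) hF₃
  have hv : (fun z : Euc d × Euc d =>
      ε⁻¹ • ((f (T₁ z.1) + g (T₂ z.2)) - C (T₁ z.1, T₂ z.2))) ∈ smoothClass κ A b' :=
    smoothClass.smul ε⁻¹ hu
  have hmapsv : ∀ z ∈ A,
      ε⁻¹ • ((f (T₁ z.1) + g (T₂ z.2)) - C (T₁ z.1, T₂ z.2)) ∈ {t : ℝ | t ≤ b'} := by
    intro z hz
    have h := smoothClass.norm_le hv hz
    exact le_trans (le_abs_self _) h
  have hE : (fun z : Euc d × Euc d =>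
      Real.exp (ε⁻¹ • ((f (T₁ z.1) + g (T₂ z.2)) - C (T₁ z.1, T₂ z.2)))) ∈
      smoothClass κ A e₀ :=
    smoothClass.comp (smoothClass.exp_mem κ b') hv hmapsv
  -- assemble
  have hεE := smoothClass.smul ε hE
  have hmain := smoothClass.add (smoothClass.sub (smoothClass.add hF₁ hF₂) hεE)
    (smoothClass.const (E := Euc d × Euc d) ε)
  have heq : (fun z : Euc d × Euc d => globalPot ε C f g (T₁ z.1) (T₂ z.2)) =
      fun z : Euc d × Euc d =>
        ((f (T₁ z.1) + g (T₂ z.2)) -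
          ε • Real.exp (ε⁻¹ • ((f (T₁ z.1) + g (T₂ z.2)) - C (T₁ z.1, T₂ z.2)))) + ε := by
    funext z
    rw [globalPot, smul_eq_mul, smul_eq_mul, div_eq_inv_mul]
  rw [heq]
  refine smoothClass.mono ?_ hmain
  exact le_max_left _ _
end
end

section
/- Let d₁, d₂, d₃ ≥ 1 and k ≥ 1 be integers, and let F : ℝ^{d₂} → ℝ^{d₃} and G : ℝ^{d₁} → ℝ^{d₂} be k-times continuously differentiable functions. Then for every x ∈ ℝ^{d₁}: ‖D^k(F ∘ G)(x)‖_op ≤ ∑_{ω ∈ Ω(k)} ‖D^{|ω|}F(G(x))‖_op · ∏_{i=1}^{|ω|} ‖D^{|ω_i|}G(x)‖_op. -/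
/-!
Faà di Bruno's formula (`iteratedFDeriv_comp`) writes `D^k (F ∘ G) x` as a sum, over the ordered
finpartitions `c` of `Fin k`, of `D^{|c|} F (G x)` applied to the derivatives `D^{|cᵢ|} G x`;
the triangle inequality bounds each term by the corresponding product of operator norms.
Forgetting the order of the parts is injective, since the parts of an ordered finpartition are
sorted by their greatest element, so this sum is dominated by the sum over all set-partitions.
-/

noncomputable section

open Function Set

section

variable {𝕜 E F G : Type*} [NontriviallyNormedField 𝕜]
  [NormedAddCommGroup E] [NormedSpace 𝕜 E] [NormedAddCommGroup F] [NormedSpace 𝕜 F]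
  [NormedAddCommGroup G] [NormedSpace 𝕜 G]

theorem norm_iteratedFDeriv_comp_le_sum_orderedFinpartition {n : WithTop ℕ∞} {g : F → G}
    {f : E → F} {x : E} (hg : ContDiffAt 𝕜 n g (f x)) (hf : ContDiffAt 𝕜 n f x) {k : ℕ}
    (hk : k ≤ n) :
    ‖iteratedFDeriv 𝕜 k (g ∘ f) x‖ ≤ ∑ c : OrderedFinpartition k,
      ‖iteratedFDeriv 𝕜 c.length g (f x)‖ * ∏ m, ‖iteratedFDeriv 𝕜 (c.partSize m) f x‖ := by
  rw [iteratedFDeriv_comp hg hf hk]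
  exact (norm_sum_le _ _).trans <| Finset.sum_le_sum fun c _ ↦
    c.norm_compAlongOrderedFinpartition_le _ _

end

namespace OrderedFinpartition

variable {n : ℕ} (c : OrderedFinpartition n)

def part (m : Fin c.length) : Finset (Fin n) :=
  Finset.univ.map ⟨c.emb m, (c.emb_strictMono m).injective⟩

@[simp]
lemma coe_part (m : Fin c.length) : (c.part m : Set (Fin n)) = range (c.emb m) := by
  simp [part]

lemma card_part (m : Fin c.length) : (c.part m).card = c.partSize m := by
  simp [part]

lemma mem_part_index (j : Fin n) : j ∈ c.part (c.index j) := by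
  rw [← Finset.mem_coe, coe_part]
  exact ⟨_, c.emb_invEmbedding j⟩

lemma part_nonempty (m : Fin c.length) : (c.part m).Nonempty :=
  ⟨_, Finset.mem_map_of_mem _ (Finset.mem_univ ⟨0, c.partSize_pos m⟩)⟩

lemma disjoint_part {m m' : Fin c.length} (h : m ≠ m') : Disjoint (c.part m) (c.part m') := by
  rw [← Finset.disjoint_coe, coe_part, coe_part]
  exact c.disjoint (mem_univ m) (mem_univ m') h

lemma part_injective : Injective c.part := fun m m' h ↦ by
  by_contra hne
  have := c.disjoint_part hne
  rw [h, Finset.disjoint_self_iff_empty] at this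
  exact (c.part_nonempty m').ne_empty this

lemma max_part (m : Fin c.length) :
    (c.part m).max = c.emb m ⟨c.partSize m - 1, Nat.sub_one_lt_of_lt (c.partSize_pos m)⟩ := by
  refine le_antisymm (Finset.max_le fun j hj ↦ ?_) (Finset.le_max ?_)
  · obtain ⟨r, -, rfl⟩ := Finset.mem_map.1 hj
    exact WithBot.coe_le_coe.2 <| (c.emb_strictMono m).monotone <| Fin.le_def.2 <| by
      simp only; omega
  · exact Finset.mem_map_of_mem _ (Finset.mem_univ _)

lemma strictMono_max_part : StrictMono fun m ↦ (c.part m).max := by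
  simp only [max_part]
  exact WithBot.coe_strictMono.comp c.parts_strictMono

def toFinpartition : Finpartition (Finset.univ : Finset (Fin n)) where
  parts := Finset.univ.image c.part
  supIndep := by
    rw [Finset.supIndep_iff_pairwiseDisjoint, Finset.coe_image, Finset.coe_univ, image_univ]
    rintro _ ⟨m, rfl⟩ _ ⟨m', rfl⟩ hne
    exact c.disjoint_part fun h ↦ hne (congrArg c.part h)
  sup_parts := Finset.eq_univ_of_forall fun j ↦
    Finset.mem_sup.2 ⟨_, Finset.mem_image_of_mem _ (Finset.mem_univ _), c.mem_part_index j⟩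
  bot_notMem := by
    simp only [Finset.bot_eq_empty, Finset.mem_image]
    rintro ⟨m, -, hm⟩
    exact (c.part_nonempty m).ne_empty hm

lemma card_parts_toFinpartition : c.toFinpartition.parts.card = c.length := by
  simp [toFinpartition, Finset.card_image_of_injective _ c.part_injective]

lemma prod_parts_toFinpartition {M : Type*} [CommMonoid M] (φ : ℕ → M) :
    ∏ b ∈ c.toFinpartition.parts, φ b.card = ∏ m, φ (c.partSize m) := by
  simp [toFinpartition, Finset.prod_image fun m _ m' _ h ↦ c.part_injective h, card_part]

lemma range_max_part :
    range (fun m ↦ (c.part m).max) = Finset.max '' c.toFinpartition.parts := by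
  simp [toFinpartition, ← range_comp, Function.comp_def]

variable {c}

lemma ext_of_part_eq : ∀ {c c' : OrderedFinpartition n} (h : c.length = c'.length),
    (∀ m, c.part m = c'.part (Fin.cast h m)) → c = c'
  | ⟨l, s, _, e, he, _, _, _⟩, ⟨_, s', _, e', he', _, _, _⟩, rfl, hpart => by
    obtain rfl : s = s' := funext fun m ↦ by
      simpa only [card_part, Fin.cast_eq_self] using congrArg Finset.card (hpart m)
    obtain rfl : e = e' := funext fun m ↦ ((he m).range_inj (he' m)).1 <| by
      simpa only [coe_part, Fin.cast_eq_self] using congrArg ((↑) : _ → Set (Fin n)) (hpart m)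
    rfl

lemma toFinpartition_injective : Injective (toFinpartition (n := n)) := by
  intro c c' h
  have hL : c.length = c'.length := by
    rw [← card_parts_toFinpartition, h, card_parts_toFinpartition]
  have hmax : (fun m ↦ (c.part m).max) = (fun m ↦ (c'.part m).max) ∘ Fin.castOrderIso hL := by
    refine (c.strictMono_max_part.range_inj
      (c'.strictMono_max_part.comp (Fin.castOrderIso hL).strictMono)).1 ?_
    rw [(Fin.castOrderIso hL).surjective.range_comp, range_max_part, range_max_part, h]
  refine ext_of_part_eq hL fun m ↦ ?_
  obtain ⟨a, ha⟩ := Finset.max_of_nonempty (c.part_nonempty m)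
  refine c.toFinpartition.eq_of_mem_parts (Finset.mem_image_of_mem _ (Finset.mem_univ _)) ?_
    (Finset.mem_of_max ha) (Finset.mem_of_max ((congrFun hmax m).symm.trans ha))
  rw [h]
  exact Finset.mem_image_of_mem _ (Finset.mem_univ _)

lemma sum_orderedFinpartition_le_sum_finpartition {M : Type*} [CommSemiring M] [PartialOrder M]
    [IsOrderedRing M] {f g : ℕ → M} (hf : ∀ j, 0 ≤ f j) (hg : ∀ j, 0 ≤ g j) :
    ∑ c : OrderedFinpartition n, f c.length * ∏ m, g (c.partSize m) ≤
      ∑ ω : Finpartition (Finset.univ : Finset (Fin n)),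
        f ω.parts.card * ∏ b ∈ ω.parts, g b.card := by
  simp only [← card_parts_toFinpartition, ← prod_parts_toFinpartition]
  rw [← Finset.sum_image (f := fun ω ↦ f ω.parts.card * ∏ b ∈ ω.parts, g b.card)
    fun c _ c' _ h ↦ toFinpartition_injective h]
  exact Finset.sum_le_univ_sum_of_nonneg fun ω ↦
    mul_nonneg (hf _) (Finset.prod_nonneg fun _ _ ↦ hg _)

end OrderedFinpartition

theorem opNorm_iteratedFDeriv_comp_le_sum_partitions_general
    {d₁ d₂ d₃ : ℕ}
    (k : ℕ)
    (F : Euc d₂ → Euc d₃) (G : Euc d₁ → Euc d₂)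
    (hF : ContDiff ℝ (k : ℕ∞) F) (hG : ContDiff ℝ (k : ℕ∞) G) (x : Euc d₁) :
    ‖iteratedFDeriv ℝ k (F ∘ G) x‖ ≤
      ∑ ω : Finpartition (Finset.univ : Finset (Fin k)),
        ‖iteratedFDeriv ℝ ω.parts.card F (G x)‖ *
          ∏ b ∈ ω.parts, ‖iteratedFDeriv ℝ b.card G x‖ := by
  calc ‖iteratedFDeriv ℝ k (F ∘ G) x‖
      ≤ ∑ c : OrderedFinpartition k,
          ‖iteratedFDeriv ℝ c.length F (G x)‖ * ∏ m, ‖iteratedFDeriv ℝ (c.partSize m) G x‖ :=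
        norm_iteratedFDeriv_comp_le_sum_orderedFinpartition hF.contDiffAt hG.contDiffAt le_rfl
    _ ≤ _ := OrderedFinpartition.sum_orderedFinpartition_le_sum_finpartition
        (fun j ↦ norm_nonneg (iteratedFDeriv ℝ j F (G x)))
        (fun j ↦ norm_nonneg (iteratedFDeriv ℝ j G x))

/-- Chain rule bound on operator norms of iterated Fréchet derivatives of a composition,
with the sum running over set-partitions of `{1,…,k}`. -/
theorem opNorm_iteratedFDeriv_comp_le_sum_partitions
    {d₁ d₂ d₃ : ℕ} (hd₁ : 1 ≤ d₁) (hd₂ : 1 ≤ d₂) (hd₃ : 1 ≤ d₃)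
    (k : ℕ) (hk : 1 ≤ k)
    (F : Euc d₂ → Euc d₃) (G : Euc d₁ → Euc d₂)
    (hF : ContDiff ℝ (k : ℕ∞) F) (hG : ContDiff ℝ (k : ℕ∞) G) (x : Euc d₁) :
    ‖iteratedFDeriv ℝ k (F ∘ G) x‖ ≤
      ∑ ω : Finpartition (Finset.univ : Finset (Fin k)),
        ‖iteratedFDeriv ℝ ω.parts.card F (G x)‖ *
          ∏ b ∈ ω.parts, ‖iteratedFDeriv ℝ b.card G x‖ :=
  opNorm_iteratedFDeriv_comp_le_sum_partitions_general k F G hF hG x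
end
end

section
/- Let K ⊂ ℝ^d be compact, let ν be a probability measure supported in K, let ε > 0, let C : ℝ^d × ℝ^d → ℝ be continuously differentiable, and let g : ℝ^d → ℝ be bounded and measurable. Define f : ℝ^d → ℝ by f(x) := −ε·log(∫ exp((g(y) − C(x,y))/ε) dν(y)). Then f is differentiable at every x ∈ ℝ^d, with gradient ∇f(x) = ∫ ∇_x C(x,y) · exp((f(x) + g(y) − C(x,y))/ε) dν(y), and ‖∇f(x)‖ ≤ sup_{y ∈ K} ‖∇_x C(x,y)‖ for every x ∈ ℝ^d. -/
open MeasureTheory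
open scoped ENNReal

noncomputable section

set_option maxHeartbeats 1000000 in
theorem gradient_of_softmin_potential
    {d : ℕ} (K : Set (Euc d)) (hK : IsCompact K)
    (ν : Measure (Euc d)) [IsProbabilityMeasure ν] (hν : ν Kᶜ = 0)
    (ε : ℝ) (hε : 0 < ε)
    (C : Euc d × Euc d → ℝ) (hC : ContDiff ℝ 1 C)
    (g : Euc d → ℝ) (hgm : Measurable g) (hgb : ∃ M : ℝ, ∀ y, |g y| ≤ M)
    (f : Euc d → ℝ)
    (hf : f = fun x => -ε * Real.log (∫ y, Real.exp ((g y - C (x, y)) / ε) ∂ν)) :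
    ∀ x : Euc d,
      HasGradientAt f
        (∫ y, Real.exp ((f x + g y - C (x, y)) / ε) •
          gradient (fun x' => C (x', y)) x ∂ν) x ∧
      ‖∫ y, Real.exp ((f x + g y - C (x, y)) / ε) •
          gradient (fun x' => C (x', y)) x ∂ν‖ ≤
        ⨆ y ∈ K, ‖gradient (fun x' => C (x', y)) x‖ := by
  intro x
  obtain ⟨M, hM⟩ := hgb
  have hKne : K.Nonempty := by
    rcases K.eq_empty_or_nonempty with h | h
    · exfalso
      rw [h, Set.compl_empty] at hν
      simp [measure_univ] at hν
    · exact h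
  have hae : ∀ᵐ y ∂ν, y ∈ K := by
    rw [MeasureTheory.ae_iff]
    exact hν
  -- the compact set on which we get uniform bounds
  have hBc : IsCompact ((Metric.closedBall x 1) ×ˢ K) :=
    (isCompact_closedBall x 1).prod hK
  obtain ⟨M₁, hM₁⟩ := hBc.exists_bound_of_continuousOn hC.continuous.continuousOn
  -- the partial derivative field
  set D : Euc d × Euc d → (Euc d →L[ℝ] ℝ) :=
    fun p => (fderiv ℝ C p).comp (ContinuousLinearMap.inl ℝ (Euc d) (Euc d)) with hDdef
  have hDcont : Continuous D :=
    (hC.continuous_fderiv one_ne_zero).clm_comp continuous_const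
  obtain ⟨M₂, hM₂⟩ := hBc.exists_bound_of_continuousOn hDcont.continuousOn
  have hM₂0 : 0 ≤ M₂ :=
    le_trans (norm_nonneg _) (hM₂ (x, hKne.choose)
      ⟨Metric.mem_closedBall_self zero_le_one, hKne.choose_spec⟩)
  have hCd : ∀ (x' y : Euc d), HasFDerivAt (fun z => C (z, y)) (D (x', y)) x' := by
    intro x' y
    exact ((hC.differentiable one_ne_zero (x', y)).hasFDerivAt).comp x'
      (hasFDerivAt_prodMk_left x' y)
  -- gradient of the slice
  have hgrad : ∀ y : Euc d,
      (InnerProductSpace.toDual ℝ (Euc d)) (gradient (fun z => C (z, y)) x) = D (x, y) := by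
    intro y
    rw [gradient, LinearIsometryEquiv.apply_symm_apply, (hCd x y).fderiv]
  have hgnorm : ∀ y : Euc d, ‖gradient (fun z => C (z, y)) x‖ = ‖D (x, y)‖ := by
    intro y
    rw [← hgrad y, LinearIsometryEquiv.norm_map]
  -- measurability of the integrand
  have hφmeas : ∀ x' : Euc d,
      AEStronglyMeasurable (fun y => Real.exp ((g y - C (x', y)) / ε)) ν := by
    intro x'
    exact (((hgm.sub ((hC.continuous.comp (Continuous.prodMk_right x')).measurable)).div_const
      ε).exp).aestronglyMeasurable
  -- uniform bound on the exponential
  have hφbound : ∀ x' ∈ Metric.closedBall x 1, ∀ y ∈ K,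
      Real.exp ((g y - C (x', y)) / ε) ≤ Real.exp ((M + M₁) / ε) := by
    intro x' hx' y hy
    apply Real.exp_le_exp.2
    have h1 : |g y| ≤ M := hM y
    have h2 : ‖C (x', y)‖ ≤ M₁ := hM₁ (x', y) ⟨hx', hy⟩
    rw [Real.norm_eq_abs] at h2
    have h3 : g y - C (x', y) ≤ M + M₁ := by
      have := abs_le.1 h1
      have := abs_le.1 h2
      linarith
    exact div_le_div_of_nonneg_right h3 hε.le
  -- integrability of the exponential
  have hφint : ∀ x' ∈ Metric.closedBall x 1,
      Integrable (fun y => Real.exp ((g y - C (x', y)) / ε)) ν := by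
    intro x' hx'
    refine Integrable.mono' (integrable_const (Real.exp ((M + M₁) / ε))) (hφmeas x') ?_
    filter_upwards [hae] with y hy
    rw [Real.norm_eq_abs, abs_of_pos (Real.exp_pos _)]
    exact hφbound x' hx' y hy
  have hφintx : Integrable (fun y => Real.exp ((g y - C (x, y)) / ε)) ν :=
    hφint x (Metric.mem_closedBall_self zero_le_one)
  -- positivity of the integral
  have hFpos : 0 < ∫ y, Real.exp ((g y - C (x, y)) / ε) ∂ν := integral_exp_pos hφintx
  -- derivative of the integrand
  set Φ : Euc d → Euc d → (Euc d →L[ℝ] ℝ) :=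
    fun x' y => Real.exp ((g y - C (x', y)) / ε) • (ε⁻¹ • (-(D (x', y)))) with hΦdef
  have hΦd : ∀ (x' y : Euc d),
      HasFDerivAt (fun z => Real.exp ((g y - C (z, y)) / ε)) (Φ x' y) x' := by
    intro x' y
    have h0 : HasFDerivAt (fun z => (g y - C (z, y)) / ε) (ε⁻¹ • (-(D (x', y)))) x' := by
      have h1 := ((hCd x' y).const_sub (g y)).const_mul ε⁻¹
      simpa [div_eq_inv_mul] using h1
    exact h0.exp
  have hΦnorm : ∀ (x' y : Euc d),
      ‖Φ x' y‖ = Real.exp ((g y - C (x', y)) / ε) * (ε⁻¹ * ‖D (x', y)‖) := by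
    intro x' y
    simp only [hΦdef]
    rw [norm_smul _ (ε⁻¹ • -D (x', y)), norm_smul ε⁻¹ (-D (x', y)), norm_neg,
      Real.norm_eq_abs, Real.norm_eq_abs, abs_of_pos (Real.exp_pos _), abs_of_pos (inv_pos.2 hε)]
  have hΦmeas : AEStronglyMeasurable (fun y => Φ x y) ν := by
    simp only [hΦdef]
    exact ((((hgm.sub ((hC.continuous.comp (Continuous.prodMk_right x)).measurable)).div_const
      ε).exp).aestronglyMeasurable).smul
      (((hDcont.comp (Continuous.prodMk_right x)).neg.const_smul ε⁻¹).aestronglyMeasurable)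
  have hΦint : Integrable (fun y => Φ x y) ν := by
    refine Integrable.mono' (integrable_const (Real.exp ((M + M₁) / ε) * (ε⁻¹ * M₂)))
      hΦmeas ?_
    filter_upwards [hae] with y hy
    rw [hΦnorm]
    have h1 := hφbound x (Metric.mem_closedBall_self zero_le_one) y hy
    have h2 : ‖D (x, y)‖ ≤ M₂ := hM₂ (x, y) ⟨Metric.mem_closedBall_self zero_le_one, hy⟩
    have h3 : (0:ℝ) < ε⁻¹ := inv_pos.2 hε
    gcongr <;> positivity
  -- differentiation under the integral sign
  have hFderiv : HasFDerivAt (fun x' => ∫ y, Real.exp ((g y - C (x', y)) / ε) ∂ν)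
      (∫ y, Φ x y ∂ν) x := by
    refine hasFDerivAt_integral_of_dominated_of_fderiv_le (bound := fun _ =>
        Real.exp ((M + M₁) / ε) * (ε⁻¹ * M₂)) (Metric.ball_mem_nhds x zero_lt_one)
      (Filter.Eventually.of_forall fun x' => hφmeas x') hφintx hΦmeas ?_
      (integrable_const _) ?_
    · filter_upwards [hae] with y hy
      intro x' hx'
      rw [hΦnorm]
      have h1 := hφbound x' (Metric.ball_subset_closedBall hx') y hy
      have h2 : ‖D (x', y)‖ ≤ M₂ := hM₂ (x', y) ⟨Metric.ball_subset_closedBall hx', hy⟩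
      have h3 : (0:ℝ) < ε⁻¹ := inv_pos.2 hε
      gcongr <;> positivity
    · filter_upwards with y
      intro x' _
      exact hΦd x' y
  -- derivative of f
  have hfD : HasFDerivAt f
      ((-ε) • ((∫ y, Real.exp ((g y - C (x, y)) / ε) ∂ν)⁻¹ • ∫ y, Φ x y ∂ν)) x := by
    rw [hf]
    exact (hFderiv.log hFpos.ne').const_mul (-ε)
  -- the key scalar identity
  have hefx : ∀ y : Euc d, Real.exp ((f x + g y - C (x, y)) / ε) =
      (∫ y', Real.exp ((g y' - C (x, y')) / ε) ∂ν)⁻¹ * Real.exp ((g y - C (x, y)) / ε) := by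
    intro y
    have h1 : (f x + g y - C (x, y)) / ε =
        (-Real.log (∫ y', Real.exp ((g y' - C (x, y')) / ε) ∂ν)) + (g y - C (x, y)) / ε := by
      rw [hf]
      field_simp
      ring
    rw [h1, Real.exp_add, Real.exp_neg, Real.exp_log hFpos]
  -- integrability of the gradient integrand
  have hGcont : Continuous (fun y => gradient (fun z => C (z, y)) x) := by
    have : (fun y => gradient (fun z => C (z, y)) x) =
        fun y => (InnerProductSpace.toDual ℝ (Euc d)).symm (D (x, y)) := by
      funext y
      rw [← hgrad y, LinearIsometryEquiv.symm_apply_apply]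
    rw [this]
    exact (InnerProductSpace.toDual ℝ (Euc d)).symm.continuous.comp
      (hDcont.comp (Continuous.prodMk_right x))
  have hemeas : AEStronglyMeasurable (fun y => Real.exp ((f x + g y - C (x, y)) / ε)) ν := by
    have : Measurable (fun y => Real.exp ((f x + g y - C (x, y)) / ε)) :=
      ((((measurable_const.add hgm).sub
        ((hC.continuous.comp (Continuous.prodMk_right x)).measurable)).div_const ε)).exp
    exact this.aestronglyMeasurable
  have hGint : Integrable (fun y => Real.exp ((f x + g y - C (x, y)) / ε) •
      gradient (fun z => C (z, y)) x) ν := by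
    refine Integrable.mono' (integrable_const
      ((∫ y', Real.exp ((g y' - C (x, y')) / ε) ∂ν)⁻¹ * Real.exp ((M + M₁) / ε) * M₂))
      (hemeas.smul hGcont.aestronglyMeasurable) ?_
    filter_upwards [hae] with y hy
    rw [norm_smul, Real.norm_eq_abs, abs_of_pos (Real.exp_pos _), hgnorm, hefx]
    have h1 := hφbound x (Metric.mem_closedBall_self zero_le_one) y hy
    have h2 : ‖D (x, y)‖ ≤ M₂ := hM₂ (x, y) ⟨Metric.mem_closedBall_self zero_le_one, hy⟩
    have h4 : (0:ℝ) ≤ (∫ y', Real.exp ((g y' - C (x, y')) / ε) ∂ν)⁻¹ := (inv_pos.2 hFpos).le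
    exact mul_le_mul (mul_le_mul_of_nonneg_left h1 h4) h2 (norm_nonneg _)
      (mul_nonneg h4 (Real.exp_pos _).le)
  -- the gradient statement
  have hmain : HasGradientAt f (∫ y, Real.exp ((f x + g y - C (x, y)) / ε) •
      gradient (fun x' => C (x', y)) x ∂ν) x := by
    rw [hasGradientAt_iff_hasFDerivAt]
    have key : (InnerProductSpace.toDual ℝ (Euc d)) (∫ y, Real.exp ((f x + g y - C (x, y)) / ε) •
        gradient (fun x' => C (x', y)) x ∂ν) =
        (-ε) • ((∫ y, Real.exp ((g y - C (x, y)) / ε) ∂ν)⁻¹ • ∫ y, Φ x y ∂ν) := by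
      apply ContinuousLinearMap.ext
      intro w
      rw [InnerProductSpace.toDual_apply_apply]
      rw [real_inner_comm, ← integral_inner hGint w]
      rw [ContinuousLinearMap.smul_apply, ContinuousLinearMap.smul_apply,
        ContinuousLinearMap.integral_apply hΦint w]
      rw [smul_eq_mul, smul_eq_mul, ← integral_const_mul, ← integral_const_mul]
      apply integral_congr_ae
      filter_upwards with y
      rw [real_inner_smul_right]
      have h5 : (inner ℝ w (gradient (fun x' => C (x', y)) x) : ℝ) = D (x, y) w := by
        rw [real_inner_comm, ← InnerProductSpace.toDual_apply_apply, hgrad y]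
      rw [h5, hefx y, hΦdef]
      simp only [ContinuousLinearMap.smul_apply, ContinuousLinearMap.neg_apply, smul_eq_mul]
      field_simp
    rw [← key] at hfD
    exact hfD
  refine ⟨hmain, ?_⟩
  -- the norm bound
  set S : ℝ := ⨆ y ∈ K, ‖gradient (fun x' => C (x', y)) x‖ with hSdef
  have hbdd : BddAbove (Set.range fun y => ⨆ _ : y ∈ K, ‖gradient (fun x' => C (x', y)) x‖) := by
    refine ⟨M₂, ?_⟩
    rintro r ⟨y, rfl⟩
    dsimp only
    by_cases hy : y ∈ K
    · rw [ciSup_pos hy, hgnorm]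
      exact hM₂ (x, y) ⟨Metric.mem_closedBall_self zero_le_one, hy⟩
    · simp only [hy, Real.iSup_of_isEmpty, iSup_eq_if, if_neg hy]
      exact hM₂0
  have hSle : ∀ y ∈ K, ‖gradient (fun x' => C (x', y)) x‖ ≤ S := by
    intro y hy
    have h1 : (⨆ _ : y ∈ K, ‖gradient (fun x' => C (x', y)) x‖) =
        ‖gradient (fun x' => C (x', y)) x‖ := ciSup_pos hy
    rw [hSdef, ← h1]
    exact le_ciSup hbdd y
  have hint1 : ∫ y, Real.exp ((f x + g y - C (x, y)) / ε) ∂ν = 1 := by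
    have : (fun y => Real.exp ((f x + g y - C (x, y)) / ε)) =
        fun y => (∫ y', Real.exp ((g y' - C (x, y')) / ε) ∂ν)⁻¹ *
          Real.exp ((g y - C (x, y)) / ε) := by
      funext y; exact hefx y
    rw [this, integral_const_mul, inv_mul_cancel₀ hFpos.ne']
  have heint : Integrable (fun y => Real.exp ((f x + g y - C (x, y)) / ε)) ν := by
    have : (fun y => Real.exp ((f x + g y - C (x, y)) / ε)) =
        fun y => (∫ y', Real.exp ((g y' - C (x, y')) / ε) ∂ν)⁻¹ *
          Real.exp ((g y - C (x, y)) / ε) := by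
      funext y; exact hefx y
    rw [this]
    exact hφintx.const_mul _
  calc ‖∫ y, Real.exp ((f x + g y - C (x, y)) / ε) • gradient (fun x' => C (x', y)) x ∂ν‖
      ≤ ∫ y, ‖Real.exp ((f x + g y - C (x, y)) / ε) • gradient (fun x' => C (x', y)) x‖ ∂ν :=
        norm_integral_le_integral_norm _
    _ ≤ ∫ y, Real.exp ((f x + g y - C (x, y)) / ε) * S ∂ν := by
        apply integral_mono_ae hGint.norm (heint.mul_const S)
        filter_upwards [hae] with y hy
        rw [norm_smul, Real.norm_eq_abs, abs_of_pos (Real.exp_pos _)]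
        exact mul_le_mul_of_nonneg_left (hSle y hy) (Real.exp_pos _).le
    _ = S := by rw [integral_mul_const, hint1, one_mul]
end
end
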